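/- arXiv:2004.08801 — 3 statements merged into one kernel-verified Lean document; each statement's English description precedes it below -/
import Mathlib

section
/- If a PFA A is carefully synchronizing and has at least 2 states, then there exists a letter a' whose transition is defined on all states and two distinct states q_1', q_2' with δ(q_1', a') = δ(q_2', a'). -/
/-- Extension of a partial transition function to words. -/
def run {Q A : Type*} (δ : Q → A → Option Q) : Q → List A → Option Q
  | q, [] => some q
  | q, x :: xs => (δ q x).bind (fun q' => run δ q' xs)

theorem exists_merge_aux {Q A : Type*} [Fintype Q] (δ : Q → A → Option Q) :
    ∀ w : List A, (∀ q : Q, (run δ q w).isSome) →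
    ¬ Function.Injective (fun q => run δ q w) →
    ∃ (a' : A) (q₁ q₂ : Q), q₁ ≠ q₂ ∧ (∀ q : Q, (δ q a').isSome) ∧
      δ q₁ a' = δ q₂ a'
  | [], _, hinj => absurd (fun a b h => by simpa [run] using h) hinj
  | a :: xs, hdef, hinj => by
    have hda : ∀ q, (δ q a).isSome := by
      intro q
      have h := hdef q
      cases hq : δ q a with
      | none => rw [run, hq] at h; simp at h
      | some q' => simp
    set f : Q → Q := fun q => (δ q a).get (hda q) with hf
    have hfeq : ∀ q, δ q a = some (f q) := fun q => (Option.some_get (hda q)).symm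
    have hrun : ∀ q, run δ q (a :: xs) = run δ (f q) xs := by
      intro q; rw [run, hfeq q]; rfl
    by_cases hfi : Function.Injective f
    · have hfb : Function.Bijective f := (Finite.injective_iff_bijective).mp hfi
      have hdef' : ∀ q : Q, (run δ q xs).isSome := by
        intro q
        obtain ⟨q', hq'⟩ := hfb.surjective q
        have := hdef q'
        rwa [hrun q', hq'] at this
      have hinj' : ¬ Function.Injective (fun q => run δ q xs) := by
        intro hg
        apply hinj
        intro q₁ q₂ h
        simp only [hrun] at h
        exact hfi (hg h)
      exact exists_merge_aux δ xs hdef' hinj'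
    · simp only [Function.Injective, not_forall] at hfi
      obtain ⟨q₁, q₂, heq, hne⟩ := hfi
      exact ⟨a, q₁, q₂, hne, hda, by rw [hfeq q₁, hfeq q₂, heq]⟩

theorem exists_total_merging_letter {Q A : Type*} [Fintype Q]
    (δ : Q → A → Option Q)
    (hcard : 1 < Fintype.card Q)
    (hsync : ∃ w : List A, ∃ qbar : Q, ∀ q : Q, run δ q w = some qbar) :
    ∃ (a' : A) (q₁ q₂ : Q), q₁ ≠ q₂ ∧ (∀ q : Q, (δ q a').isSome) ∧
      δ q₁ a' = δ q₂ a' := by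
  obtain ⟨w, qbar, hw⟩ := hsync
  apply exists_merge_aux δ w (fun q => by rw [hw q]; simp)
  intro hinj
  obtain ⟨x, y, hxy⟩ := Fintype.exists_pair_of_one_lt_card hcard
  exact hxy (hinj (by simp only [hw x, hw y]))
end

section
/- For every n > 3 there exists a carefully synchronizing PFA with n states whose shortest carefully synchronizing word has length at least 3^{⌊n/3⌋} − 1 (hence length Ω(3^{n/3})). -/
/-- A word carefully synchronizes a PFA: defined on all states and mapping all
states to one common state. -/
def CarefullySync {Q A : Type*} (δ : Q → A → Option Q) (w : List A) : Prop :=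
  ∃ qbar : Q, ∀ q : Q, run δ q w = some qbar

namespace LongSync

/-- the `i`-th ternary digit of `m` -/
def dg (m i : ℕ) : ℕ := m / 3 ^ i % 3

lemma dg_lt (m i : ℕ) : dg m i < 3 := Nat.mod_lt _ (by norm_num)

lemma mod_succ_pow (m j : ℕ) : m % 3 ^ (j+1) = 3 ^ j * dg m j + m % 3 ^ j := by
  have h1 : (m % 3 ^ (j+1)) / 3 ^ j = m / 3 ^ j % 3 := by
    rw [pow_succ]; exact Nat.mod_mul_right_div_self m (3^j) 3
  have h2 : (m % 3 ^ (j+1)) % 3 ^ j = m % 3 ^ j :=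
    Nat.mod_mod_of_dvd m (pow_dvd_pow 3 (Nat.le_succ j))
  have h3 := Nat.div_add_mod (m % 3 ^ (j+1)) (3 ^ j)
  rw [h1, h2] at h3
  unfold dg
  omega

lemma mod_pow_eq {m j : ℕ} (h : ∀ i < j, dg m i = 2) : m % 3 ^ j = 3 ^ j - 1 := by
  induction j with
  | zero => simp [Nat.mod_one]
  | succ j ih =>
    have hpos : 0 < 3 ^ j := pow_pos (by norm_num) j
    have h1 := mod_succ_pow m j
    have h2 : m % 3 ^ j = 3 ^ j - 1 := ih (fun i hi => h i (by omega))
    have h3 : dg m j = 2 := h j (by omega)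
    rw [h3] at h1
    have h4 : (3:ℕ) ^ (j+1) = 3 ^ j * 3 := pow_succ 3 j
    omega

lemma dg_eq_mod_div (m j : ℕ) : dg m j = m % 3 ^ (j+1) / 3 ^ j := by
  have hpos : 0 < 3 ^ j := pow_pos (by norm_num) j
  have h1 := mod_succ_pow m j
  have h2 : m % 3 ^ j < 3 ^ j := Nat.mod_lt _ hpos
  rw [h1, Nat.mul_add_div hpos, Nat.div_eq_of_lt h2]
  omega

lemma dg_pred {j k : ℕ} (h : j < k) : dg (3 ^ k - 1) j = 2 := by
  have hpos : 0 < 3 ^ j := pow_pos (by norm_num) j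
  have hdvd : (3:ℕ) ^ (j+1) ∣ 3 ^ k := pow_dvd_pow 3 (by omega)
  obtain ⟨s, hs⟩ := hdvd
  have hP : 0 < 3 ^ (j+1) := pow_pos (by norm_num) (j+1)
  have hs1 : 0 < s := by
    rcases Nat.eq_zero_or_pos s with rfl | h
    · rw [Nat.mul_zero] at hs
      have := pow_pos (show (0:ℕ)<3 by norm_num) k; omega
    · exact h
  obtain ⟨s', rfl⟩ : ∃ s', s = s' + 1 := ⟨s - 1, by omega⟩
  have key : (3 ^ k - 1) % 3 ^ (j+1) = 3 ^ (j+1) - 1 := by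
    have : 3 ^ k - 1 = 3 ^ (j+1) * s' + (3 ^ (j+1) - 1) := by
      rw [hs]; rw [Nat.mul_add]; omega
    rw [this, Nat.mul_add_mod, Nat.mod_eq_of_lt (by omega)]
  rw [dg_eq_mod_div, key]
  have h4 : (3:ℕ) ^ (j+1) = 3 ^ j * 3 := pow_succ 3 j
  have : (3:ℕ) ^ (j+1) - 1 = 3 ^ j * 2 + (3 ^ j - 1) := by omega
  rw [this, Nat.mul_add_div hpos, Nat.div_eq_of_lt (by omega)]

section inc
variable {m : ℕ} {j : ℕ}

lemma key_inc (h2 : ∀ i < j, dg m i = 2) (hj : dg m j ≤ 1) :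
    m + 1 = 3 ^ (j+1) * (m / 3 ^ (j+1)) + 3 ^ j * (dg m j + 1) := by
  have h1 := mod_succ_pow m j
  have h2' : m % 3 ^ j = 3 ^ j - 1 := mod_pow_eq h2
  have h3 := Nat.div_add_mod m (3 ^ (j+1))
  have hpos : 0 < 3 ^ j := pow_pos (by norm_num) j
  have hmul : 3 ^ j * (dg m j + 1) = 3 ^ j * dg m j + 3 ^ j := by ring
  omega

lemma dg_of_dvd {t i : ℕ} (h : 3 ^ (i+1) ∣ t) : dg t i = 0 := by
  obtain ⟨c, rfl⟩ := h
  unfold dg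
  rw [pow_succ, Nat.mul_assoc, Nat.mul_div_cancel_left _ (pow_pos (by norm_num) i),
    Nat.mul_mod_right]

lemma dvd_succ_of_inc (h2 : ∀ i < j, dg m i = 2) (hj : dg m j ≤ 1) :
    3 ^ j ∣ m + 1 := by
  refine ⟨3 * (m / 3 ^ (j+1)) + (dg m j + 1), ?_⟩
  rw [key_inc h2 hj, pow_succ]
  ring

lemma dg_inc_lt (h2 : ∀ i < j, dg m i = 2) (hj : dg m j ≤ 1) {i : ℕ} (hi : i < j) :
    dg (m+1) i = 0 :=
  dg_of_dvd (dvd_trans (pow_dvd_pow 3 (by omega)) (dvd_succ_of_inc h2 hj))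

lemma dg_inc_eq (h2 : ∀ i < j, dg m i = 2) (hj : dg m j ≤ 1) :
    dg (m+1) j = dg m j + 1 := by
  have key := key_inc h2 hj
  have : m + 1 = 3 ^ j * (3 * (m / 3 ^ (j+1)) + (dg m j + 1)) := by
    rw [key, pow_succ]; ring
  unfold dg
  rw [this, Nat.mul_div_cancel_left _ (pow_pos (by norm_num) j)]
  conv_lhs => rw [Nat.add_comm, Nat.add_mul_mod_self_left]
  exact Nat.mod_eq_of_lt (by omega)

lemma dg_inc_gt (h2 : ∀ i < j, dg m i = 2) (hj : dg m j ≤ 1) {i : ℕ} (hi : j < i) :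
    dg (m+1) i = dg m i := by
  have key := key_inc h2 hj
  have hP : (0:ℕ) < 3 ^ (j+1) := pow_pos (by norm_num) (j+1)
  have hq : (m + 1) / 3 ^ (j+1) = m / 3 ^ (j+1) := by
    have hlt : 3 ^ j * (dg m j + 1) < 3 ^ (j+1) := by
      have : (3:ℕ) ^ (j+1) = 3 ^ j * 3 := pow_succ 3 j
      have hpos : 0 < 3 ^ j := pow_pos (by norm_num) j
      nlinarith
    rw [key, Nat.mul_add_div hP, Nat.div_eq_of_lt hlt, Nat.add_zero]
  have hsplit : ∀ t : ℕ, t / 3 ^ i = t / 3 ^ (j+1) / 3 ^ (i - j - 1) := by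
    intro t
    rw [Nat.div_div_eq_div_mul, ← pow_add]
    congr 2
    omega
  unfold dg
  rw [hsplit, hsplit, hq]

end inc


inductive Alph (k : ℕ) : Type where
  | e : Alph k
  | z : Alph k
  | f : Alph k
  | b : Fin k → Alph k

abbrev St (k r : ℕ) : Type := Fin k × Fin 3 ⊕ Fin r

variable {k r : ℕ}

def core (hk : 0 < k) : St k r → Fin k × Fin 3
  | Sum.inl c => c
  | Sum.inr _ => (⟨0, hk⟩, 0)

def dgF (m : ℕ) (i : Fin k) : Fin 3 := ⟨dg m i, dg_lt m i⟩

@[simp] lemma dgF_val (m : ℕ) (i : Fin k) : (dgF m i).val = dg m i.val := rfl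

def succ3 (d : Fin 3) : Fin 3 := ⟨(d.val + 1) % 3, Nat.mod_lt _ (by norm_num)⟩

lemma succ3_val {d : Fin 3} (h : d.val ≠ 2) : (succ3 d).val = d.val + 1 := by
  have := d.isLt
  simp only [succ3]
  omega

def step (hk : 0 < k) : St k r → Alph k → Option (St k r)
  | Sum.inl (i, d), .e => some (Sum.inl (i, d))
  | Sum.inr _, .e => some (Sum.inl (⟨0, hk⟩, 0))
  | Sum.inl (i, _), .z => some (Sum.inl (i, 0))
  | Sum.inr _, .z => none
  | Sum.inl (_, d), .f => if d.val = 2 then some (Sum.inl (⟨0, hk⟩, 2)) else none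
  | Sum.inr _, .f => none
  | Sum.inl (i, d), .b j =>
      if i.val < j.val then (if d.val = 2 then some (Sum.inl (i, 0)) else none)
      else if i.val = j.val then
        (if d.val = 2 then none else some (Sum.inl (i, succ3 d)))
      else some (Sum.inl (i, d))
  | Sum.inr _, .b _ => none


lemma step_b (hk : 0 < k) (m : ℕ) (j : Fin k)
    (h2 : ∀ i : ℕ, i < j.val → dg m i = 2) (hj : dg m j.val ≤ 1) (i : Fin k) :
    step (r := r) hk (Sum.inl (i, dgF m i)) (Alph.b j) = some (Sum.inl (i, dgF (m+1) i)) := by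
  rcases lt_trichotomy i.val j.val with h | h | h
  · have e1 : dg m i.val = 2 := h2 _ h
    have e2 : dg (m+1) i.val = 0 := dg_inc_lt h2 hj h
    simp only [step, if_pos h]
    rw [if_pos (show (dgF m i).val = 2 from e1)]
    simp [dgF, Fin.ext_iff, e2]
  · have e1 : ¬ (dg m i.val = 2) := by rw [h]; omega
    have e2 : dg (m+1) i.val = dg m i.val + 1 := by
      rw [h] at e1 ⊢; exact dg_inc_eq h2 (by omega)
    simp only [step, if_neg (by omega : ¬ i.val < j.val), if_pos h]
    rw [if_neg (show ¬ (dgF m i).val = 2 from e1)]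
    simp only [Option.some.injEq, Sum.inl.injEq, Prod.mk.injEq, true_and]
    exact Fin.ext (by rw [succ3_val (show (dgF m i).val ≠ 2 from e1), dgF_val, dgF_val, e2])
  · have e2 : dg (m+1) i.val = dg m i.val := dg_inc_gt h2 hj h
    simp only [step, if_neg (by omega : ¬ i.val < j.val), if_neg (by omega : ¬ i.val = j.val)]
    simp [dgF, Fin.ext_iff, e2]


lemma run_append {Q A : Type*} (δ : Q → A → Option Q) (q : Q) (u v : List A) :
    run δ q (u ++ v) = (run δ q u).bind (fun q' => run δ q' v) := by
  induction u generalizing q with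
  | nil => simp [run]
  | cons x xs ih =>
    simp only [List.cons_append, run]
    cases δ q x with
    | none => simp
    | some q' => simp [ih]

lemma run_single {Q A : Type*} (δ : Q → A → Option Q) (q : Q) (x : A) :
    run δ q [x] = δ q x := by
  simp only [run]
  cases δ q x <;> simp [run]

def ConfP (hk : 0 < k) (m : ℕ) (u : List (Alph k)) : Prop :=
  ∀ q : St k r, run (step hk) q u = some (Sum.inl ((core hk q).1, dgF m (core hk q).1))

def CoreP (hk : 0 < k) (u : List (Alph k)) : Prop :=
  ∀ q : St k r, run (step hk) q u = some (Sum.inl (core hk q))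

def SyncP (hk : 0 < k) (u : List (Alph k)) : Prop :=
  ∃ qbar : St k r, ∀ q : St k r, run (step hk) q u = some qbar

lemma main (hk : 0 < k) (u : List (Alph k))
    (htot : ∀ q : St k r, (run (step hk) q u).isSome) :
    u = [] ∨ CoreP (r := r) hk u ∨
      (∃ m, ConfP (r := r) hk m u ∧ m + 1 ≤ u.length ∧ (0 < r → m + 2 ≤ u.length)) ∨
      (SyncP (r := r) hk u ∧ 3 ^ k + 1 ≤ u.length) := by
  induction u using List.reverseRecOn with
  | nil => exact Or.inl rfl
  | append_singleton v x ih =>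
    have htv : ∀ q : St k r, (run (step hk) q v).isSome := by
      intro q
      have h := htot q
      rw [run_append] at h
      cases hq : run (step hk) q v with
      | none => rw [hq] at h; simp at h
      | some _ => simp
    have hstep : ∀ q : St k r, run (step hk) q (v ++ [x]) =
        (run (step hk) q v).bind (fun q' => step hk q' x) := by
      intro q
      rw [run_append]
      congr 1
      funext q'
      exact run_single _ _ _
    have hlen : (v ++ [x]).length = v.length + 1 := by simp
    rcases ih htv with rfl | hcore | ⟨m, hconf, hl1, hl2⟩ | ⟨hsync, hl⟩
    -- ===== case v = [] =====
    · cases x with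
      | e =>
        refine Or.inr (Or.inl ?_)
        intro q
        rcases q with ⟨i, d⟩ | s <;> simp [run, step, core, run_single]
      | z =>
        by_cases hr : 0 < r
        · exfalso
          have h := htot (Sum.inr ⟨0, hr⟩)
          simp [run, step] at h
        · refine Or.inr (Or.inr (Or.inl ⟨0, ?_, by simp, fun h => absurd h hr⟩))
          intro q
          rcases q with ⟨i, d⟩ | s
          · simp [run, step, core, dgF, dg, Fin.ext_iff]
          · exact absurd s.isLt (by omega)
      | f =>
        exfalso
        have h := htot (Sum.inl (⟨0, hk⟩, 0))
        simp [run, step] at h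
      | b j =>
        exfalso
        have h := htot (Sum.inl (j, 2))
        simp [run, step] at h
    -- ===== case CoreP v =====
    · cases x with
      | e =>
        refine Or.inr (Or.inl ?_)
        intro q
        rw [hstep, hcore q]
        rcases hc : core hk q with ⟨i, d⟩
        simp [step]
      | z =>
        refine Or.inr (Or.inr (Or.inl ⟨0, ?_, by simp, ?_⟩))
        · intro q
          rw [hstep, hcore q]
          rcases hc : core hk q with ⟨i, d⟩
          simp [step, dgF, dg, Fin.ext_iff]
        · intro hr
          have hv : v ≠ [] := by
            intro hv0
            have h := hcore (Sum.inr ⟨0, hr⟩)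
            rw [hv0] at h
            simp [run, core] at h
          have : 1 ≤ v.length := List.length_pos_iff.mpr hv
          omega
      | f =>
        exfalso
        have h := htot (Sum.inl (⟨0, hk⟩, 0))
        rw [hstep, hcore (Sum.inl (⟨0, hk⟩, 0))] at h
        simp [step, core] at h
      | b j =>
        exfalso
        have h := htot (Sum.inl (j, 2))
        rw [hstep, hcore (Sum.inl (j, 2))] at h
        simp [step, core] at h
    -- ===== case ConfP m v =====
    · cases x with
      | e =>
        refine Or.inr (Or.inr (Or.inl ⟨m, ?_, by omega, fun hr => by have := hl2 hr; omega⟩))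
        intro q
        rw [hstep, hconf q]
        simp [step]
      | z =>
        refine Or.inr (Or.inr (Or.inl ⟨0, ?_, by omega, fun hr => by omega⟩))
        intro q
        rw [hstep, hconf q]
        simp [step, dgF, dg, Fin.ext_iff]
      | f =>
        have h2all : ∀ i : Fin k, dg m i.val = 2 := by
          intro i
          have h := htot (Sum.inl (i, 0))
          rw [hstep, hconf (Sum.inl (i, 0))] at h
          simp only [core, Option.bind_some, step] at h
          by_contra hcon
          rw [if_neg (show ¬ (dgF m i).val = 2 from hcon)] at h
          simp at h
        have hge : 3 ^ k - 1 ≤ m := by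
          have := mod_pow_eq (m := m) (j := k) (fun i hi => h2all ⟨i, hi⟩)
          have := Nat.mod_le m (3 ^ k)
          omega
        refine Or.inr (Or.inr (Or.inr ⟨⟨Sum.inl (⟨0, hk⟩, 2), ?_⟩, ?_⟩))
        · intro q
          rw [hstep, hconf q]
          simp only [Option.bind_some, step]
          rw [if_pos (show (dgF m (core hk q).1).val = 2 from h2all _)]
        · have hp : 0 < 3 ^ k := pow_pos (by norm_num) k
          omega
      | b j =>
        have h2 : ∀ i' : ℕ, i' < j.val → dg m i' = 2 := by
          intro i' hi'
          have hik : i' < k := lt_trans hi' j.isLt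
          have h := htot (Sum.inl (⟨i', hik⟩, 0))
          rw [hstep, hconf (Sum.inl (⟨i', hik⟩, 0))] at h
          simp only [core, Option.bind_some, step] at h
          rw [if_pos (show ((⟨i', hik⟩ : Fin k)).val < j.val from hi')] at h
          by_contra hcon
          rw [if_neg (show ¬ (dgF m (⟨i', hik⟩ : Fin k)).val = 2 from hcon)] at h
          simp at h
        have hj : dg m j.val ≤ 1 := by
          have h := htot (Sum.inl (j, 0))
          rw [hstep, hconf (Sum.inl (j, 0))] at h
          by_contra hcon
          have he : dg m j.val = 2 := by have := dg_lt m j.val; omega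
          simp [step, core, he] at h
        refine Or.inr (Or.inr (Or.inl ⟨m + 1, ?_, by omega, fun hr => by have := hl2 hr; omega⟩))
        intro q
        rw [hstep, hconf q]
        simp only [Option.bind_some]
        exact step_b hk m j h2 hj _
    -- ===== case SyncP v =====
    · obtain ⟨q0, hq0⟩ := hsync
      have h := htot (Sum.inl (⟨0, hk⟩, 0))
      rw [hstep, hq0 (Sum.inl (⟨0, hk⟩, 0))] at h
      simp only [Option.bind_some] at h
      cases hq1 : step (r := r) hk q0 x with
      | none => rw [hq1] at h; simp at h
      | some q1 =>
        refine Or.inr (Or.inr (Or.inr ⟨⟨q1, ?_⟩, by omega⟩))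
        intro q
        rw [hstep, hq0 q]
        simp [hq1]



lemma conf_reach (hk : 0 < k) (m : ℕ) (hm : m < 3 ^ k) :
    ∃ w : List (Alph k), ConfP (r := r) hk m (Alph.e :: Alph.z :: w) := by
  induction m with
  | zero =>
    refine ⟨[], fun q => ?_⟩
    rcases q with ⟨i, d⟩ | s <;>
      simp [run, step, core, dgF, dg, Fin.ext_iff]
  | succ m ih =>
    obtain ⟨w, hw⟩ := ih (lt_trans (Nat.lt_succ_self m) hm)
    have hmk : m < 3 ^ k := lt_trans (Nat.lt_succ_self m) hm
    have hne : ∃ j, dg m j ≠ 2 := by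
      refine ⟨k, ?_⟩
      unfold dg
      rw [Nat.div_eq_of_lt hmk]
      simp
    have hj0 := Nat.find_spec hne
    have hmin : ∀ i < Nat.find hne, dg m i = 2 :=
      fun i hi => not_not.mp (Nat.find_min hne hi)
    have hj0k : Nat.find hne < k := by
      by_contra hge
      push_neg at hge
      have hall : ∀ i < k, dg m i = 2 := fun i hi => hmin i (lt_of_lt_of_le hi hge)
      have h1 := mod_pow_eq hall
      have h2 := Nat.mod_le m (3 ^ k)
      omega
    refine ⟨w ++ [Alph.b ⟨Nat.find hne, hj0k⟩], fun q => ?_⟩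
    have : (Alph.e :: Alph.z :: (w ++ [Alph.b (⟨Nat.find hne, hj0k⟩ : Fin k)])) =
        (Alph.e :: Alph.z :: w) ++ [Alph.b (⟨Nat.find hne, hj0k⟩ : Fin k)] := rfl
    rw [this, run_append, hw q]
    simp only [Option.bind_some]
    rw [run_single]
    refine step_b hk m ⟨Nat.find hne, hj0k⟩ hmin ?_ _
    show dg m (Nat.find hne) ≤ 1
    have h1 := dg_lt m (Nat.find hne)
    omega

lemma exists_sync (hk : 0 < k) : ∃ w : List (Alph k), SyncP (r := r) hk w := by
  have hp : 0 < 3 ^ k := pow_pos (by norm_num) k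
  obtain ⟨w, hw⟩ := conf_reach (r := r) hk (3 ^ k - 1) (by omega)
  refine ⟨(Alph.e :: Alph.z :: w) ++ [Alph.f], Sum.inl (⟨0, hk⟩, 2), fun q => ?_⟩
  rw [run_append, hw q]
  simp only [Option.bind_some]
  rw [run_single]
  simp only [step]
  rw [if_pos (show (dgF (3 ^ k - 1) (core hk q).1).val = 2 from dg_pred (core hk q).1.isLt)]


end LongSync

/-- For every `n > 3` there is an `n`-state carefully synchronizing PFA whose
shortest carefully synchronizing word has length at least `3^⌊n/3⌋ − 1`. -/
theorem exists_pfa_long_careful_sync (n : ℕ) (hn : 3 < n) :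
    ∃ (Q : Type) (_ : Fintype Q) (A : Type) (δ : Q → A → Option Q),
      Fintype.card Q = n ∧
      (∃ w : List A, CarefullySync δ w) ∧
      (∀ w : List A, CarefullySync δ w → 3 ^ (n / 3) - 1 ≤ w.length) := by
  have hk : 0 < n / 3 := Nat.div_pos (by omega) (by norm_num)
  refine ⟨LongSync.St (n / 3) (n % 3), inferInstance, LongSync.Alph (n / 3),
    LongSync.step hk, ?_, ?_, ?_⟩
  · simp only [LongSync.St, Fintype.card_sum, Fintype.card_prod, Fintype.card_fin]
    omega
  · obtain ⟨w, hw⟩ := LongSync.exists_sync (r := n % 3) hk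
    exact ⟨w, hw⟩
  · intro w hw
    have htot : ∀ q, (run (LongSync.step (r := n % 3) hk) q w).isSome := by
      obtain ⟨qb, h⟩ := hw
      intro q
      rw [h q]
      rfl
    rcases LongSync.main hk w htot with rfl | hcore | ⟨m, hconf, hl1, hl2⟩ | ⟨_, hl⟩
    · exfalso
      obtain ⟨qb, h⟩ := hw
      have e1 := (h (Sum.inl (⟨0, hk⟩, 0))).trans (h (Sum.inl (⟨0, hk⟩, 1))).symm
      simp only [run, Option.some.injEq, Sum.inl.injEq, Prod.mk.injEq] at e1
      exact absurd e1.2 (by decide)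
    · exfalso
      obtain ⟨qb, h⟩ := hw
      have e1 := (hcore (Sum.inl (⟨0, hk⟩, 0))).symm.trans (h _)
      have e2 := (hcore (Sum.inl (⟨0, hk⟩, 1))).symm.trans (h _)
      rw [← e1] at e2
      simp only [LongSync.core, Option.some.injEq, Sum.inl.injEq, Prod.mk.injEq] at e2
      exact absurd e2.2 (by decide)
    · by_cases h2k : 2 ≤ n / 3
      · exfalso
        obtain ⟨qb, h⟩ := hw
        have e1 := (hconf (Sum.inl (⟨0, hk⟩, 0))).symm.trans (h _)
        have e2 := (hconf (Sum.inl (⟨1, h2k⟩, 0))).symm.trans (h _)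
        rw [← e1] at e2
        simp only [LongSync.core, Option.some.injEq, Sum.inl.injEq, Prod.mk.injEq,
          Fin.mk.injEq] at e2
        omega
      · have hk1 : n / 3 = 1 := by omega
        have hr : 0 < n % 3 := by omega
        have h2 := hl2 hr
        have h3 : (3:ℕ) ^ (n / 3) = 3 := by rw [hk1]; norm_num
        omega
    · have hp : 0 < 3 ^ (n / 3) := pow_pos (by norm_num) _
      omega
end

section
/- In the Černý automaton C_n with n even, starting from the set of even states S_{n/2} = {q_0, q_2, ..., q_{n−2}}, for every k < n/2 − 1 the image of S_{n/2} under (c_1 c_2^{n-1})^{2k} equals {q_0, q_2, ..., q_{n−2k−2}}; consequently the image under (c_1c_2^{n-1})^{n-4} is {q_0, q_2} and applying c_1 c_2^{n-1} c_1 then yields the singleton {q_1}. -/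
/-- Letter `c₁` of the Černý automaton. -/
def c1 : Fin 2 := 0

/-- Letter `c₂` of the Černý automaton. -/
def c2 : Fin 2 := 1

/-- Transition function of the Černý automaton `C_n` on states `{0,…,n-1}`:
`c₁` sends `q₀` to `q₁` and fixes the other states, `c₂` is the cyclic shift. -/
def γC (n : ℕ) : ℕ → Fin 2 → ℕ := fun q x =>
  if x = c1 then (if q = 0 then 1 else q) else (q + 1) % n

/-- Action of a word on a state of `C_n`. -/
def runC (n : ℕ) (q : ℕ) (w : List (Fin 2)) : ℕ :=
  w.foldl (γC n) q

lemma runC_append (n q : ℕ) (a b : List (Fin 2)) :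
    runC n q (a ++ b) = runC n (runC n q a) b := by
  simp [runC, List.foldl_append]

lemma runC_c2 (n : ℕ) (hn : 0 < n) : ∀ (m q : ℕ), q < n →
    runC n q (List.replicate m c2) = (q + m) % n := by
  intro m
  induction m with
  | zero => intro q hq; simp [runC, Nat.mod_eq_of_lt hq]
  | succ m ih =>
    intro q hq
    have h1 : (q + 1) % n < n := Nat.mod_lt _ hn
    calc runC n q (List.replicate (m+1) c2)
        = runC n ((q+1) % n) (List.replicate m c2) := by
          simp [List.replicate_succ, runC, γC, c2, c1]
      _ = ((q+1) % n + m) % n := ih _ h1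
      _ = (q + (m+1)) % n := by rw [Nat.mod_add_mod]; ring_nf

lemma runC_v (n : ℕ) (hn : 2 < n) (q : ℕ) (hq : q < n) :
    runC n q (c1 :: List.replicate (n - 1) c2) = q - 1 := by
  have h0 : 0 < n := by omega
  have : runC n q (c1 :: List.replicate (n - 1) c2)
      = runC n (γC n q c1) (List.replicate (n - 1) c2) := by
    simp [runC]
  rw [this]
  by_cases hq0 : q = 0
  · subst hq0
    have : γC n 0 c1 = 1 := by simp [γC]
    rw [this, runC_c2 n h0 _ _ (by omega)]
    have : 1 + (n - 1) = n := by omega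
    rw [this, Nat.mod_self]
  · have : γC n q c1 = q := by simp [γC, hq0]
    rw [this, runC_c2 n h0 _ _ hq]
    have h1 : q + (n - 1) = (q - 1) + n := by omega
    rw [h1, Nat.add_mod_right, Nat.mod_eq_of_lt (by omega)]

lemma runC_vpow (n : ℕ) (hn : 2 < n) : ∀ (j q : ℕ), q < n →
    runC n q ((List.replicate j (c1 :: List.replicate (n - 1) c2)).flatten) = q - j := by
  intro j
  induction j with
  | zero => intro q hq; simp [runC]
  | succ j ih =>
    intro q hq
    rw [List.replicate_succ, List.flatten_cons, runC_append,
      runC_v n hn q hq, ih _ (by omega)]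
    omega

/-- For even `n > 2`, starting from the even-indexed states
`S = {q_0, q_2, …, q_{n−2}}`: for every `k < n/2 − 1` the image of `S` under
`(c₁ c₂^{n-1})^{2k}` is `{q_0, q_2, …, q_{n−2k−2}}`; consequently the image under
`(c₁ c₂^{n-1})^{n-4}` is `{q_0, q_2}`, and applying `c₁ c₂^{n-1} c₁` afterwards
yields the singleton `{q_1}`. -/
theorem cerny_even_image_v_pow (n : ℕ) (hn : 2 < n) (hpar : Even n) :
    (∀ k, k < n / 2 - 1 →
      ((Finset.range (n / 2)).image (fun t => 2 * t)).image
          (fun q => runC n q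
            (List.replicate (2 * k) (c1 :: List.replicate (n - 1) c2)).flatten) =
        (Finset.range (n / 2 - k)).image (fun t => 2 * t)) ∧
    ((Finset.range (n / 2)).image (fun t => 2 * t)).image
        (fun q => runC n q
          (List.replicate (n - 4) (c1 :: List.replicate (n - 1) c2)).flatten) =
      {0, 2} ∧
    ((Finset.range (n / 2)).image (fun t => 2 * t)).image
        (fun q => runC n q
          ((List.replicate (n - 4) (c1 :: List.replicate (n - 1) c2)).flatten
            ++ (c1 :: List.replicate (n - 1) c2) ++ [c1])) =
      {1} := by
  obtain ⟨r, hr⟩ := hpar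
  have hr' : n = 2 * r := by omega
  have hn2 : n / 2 = r := by omega
  have main : ∀ k, k ≤ n / 2 - 1 →
      ((Finset.range (n / 2)).image (fun t => 2 * t)).image
          (fun q => runC n q
            (List.replicate (2 * k) (c1 :: List.replicate (n - 1) c2)).flatten) =
        (Finset.range (n / 2 - k)).image (fun t => 2 * t) := by
    intro k hk
    ext m
    simp only [Finset.mem_image, Finset.mem_range]
    constructor
    · rintro ⟨q, ⟨t, ht, rfl⟩, rfl⟩
      have hlt : 2 * t < n := by omega
      rw [runC_vpow n hn _ _ hlt]
      by_cases htk : t ≤ k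
      · exact ⟨0, by omega, by omega⟩
      · exact ⟨t - k, by omega, by omega⟩
    · rintro ⟨s, hs, rfl⟩
      refine ⟨2 * (s + k), ⟨s + k, by omega, rfl⟩, ?_⟩
      rw [runC_vpow n hn _ _ (by omega)]
      omega
  have h4 : n - 4 = 2 * (n / 2 - 2) := by omega
  have part2 : ((Finset.range (n / 2)).image (fun t => 2 * t)).image
        (fun q => runC n q
          (List.replicate (n - 4) (c1 :: List.replicate (n - 1) c2)).flatten) =
      ({0, 2} : Finset ℕ) := by
    rw [h4, main (n / 2 - 2) (by omega)]
    have : n / 2 - (n / 2 - 2) = 2 := by omega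
    rw [this]
    decide
  refine ⟨fun k hk => main k (by omega), part2, ?_⟩
  have himg : ∀ q ∈ (Finset.range (n / 2)).image (fun t => 2 * t),
      runC n q ((List.replicate (n - 4) (c1 :: List.replicate (n - 1) c2)).flatten
            ++ (c1 :: List.replicate (n - 1) c2) ++ [c1]) = 1 := by
    intro q hq
    rw [runC_append, runC_append]
    have hq' : runC n q
        (List.replicate (n - 4) (c1 :: List.replicate (n - 1) c2)).flatten ∈
        ({0, 2} : Finset ℕ) := by
      rw [← part2]; exact Finset.mem_image_of_mem _ hq
    simp only [Finset.mem_insert, Finset.mem_singleton] at hq'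
    rcases hq' with h | h <;> rw [h] <;>
      rw [runC_v n hn _ (by omega)] <;> simp [runC, γC, c1]
  ext m
  constructor
  · intro hm
    obtain ⟨q, hq, rfl⟩ := Finset.mem_image.mp hm
    simpa using himg q hq
  · intro hm
    simp only [Finset.mem_singleton] at hm
    subst hm
    have h0 : (0 : ℕ) ∈ (Finset.range (n / 2)).image (fun t => 2 * t) :=
      Finset.mem_image.mpr ⟨0, Finset.mem_range.mpr (by omega), rfl⟩
    exact Finset.mem_image.mpr ⟨0, h0, himg 0 h0⟩
end
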